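/- arXiv:2201.02970 — 2 statements merged into one kernel-verified Lean document; each statement's English description precedes it below -/
import Mathlib

section
/- For every edge uv of a graph G with n vertices, m edges, and minimum degree at least 2, the number of induced copies of C_4 in G containing the edge uv is at most m − n + 1. -/
/-!
An induced 4-cycle `u v x y` through the edge `uv` is determined by its edge `xy` opposite `uv`,
which avoids `u` and `v` and has both ends in `A = N(u) ∪ N(v)`. These opposite edges, the
`deg u + deg v - 1` edges at `u` or `v`, and the edges meeting the complement of `A` are three
disjoint families of edges. As every vertex outside `A` has degree at least 2, the last family has
at least `n - |A| ≥ n - deg u - deg v` edges, and adding up gives the bound.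
-/

open Finset SimpleGraph

namespace SimpleGraph

variable {V : Type*} [Fintype V] [DecidableEq V] (G : SimpleGraph V) [DecidableRel G.Adj]

theorem mul_card_compl_le_two_mul_card_edges_meeting_compl (s : Finset V) (k : ℕ)
    (hdeg : ∀ w ∉ s, k ≤ G.degree w) :
    k * #sᶜ ≤ 2 * #{e ∈ G.edgeFinset | ∃ w ∈ e, w ∉ s} := by
  rw [mul_comm k, mul_comm 2]
  refine card_mul_le_card_mul (fun w e => w ∈ e) (fun w hw => ?_) (fun e _ => ?_)
  · rw [mem_compl] at hw
    refine (hdeg w hw).trans ((G.card_incidenceFinset_eq_degree w).symm.trans_le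
      (card_le_card fun e he => ?_))
    rw [mem_incidenceFinset] at he
    simp only [mem_bipartiteAbove, mem_filter, mem_edgeFinset]
    exact ⟨⟨he.1, w, he.2, hw⟩, he.2⟩
  · calc #(sᶜ.bipartiteBelow (fun w e => w ∈ e) e) ≤ #e.toFinset :=
          card_le_card fun w hw => Sym2.mem_toFinset.mpr ((mem_bipartiteBelow _).mp hw).2
      _ ≤ 2 := by rw [Sym2.card_toFinset]; split_ifs <;> norm_num

theorem card_incidenceFinset_union_add_one {u v : V} (huv : G.Adj u v) :
    #(G.incidenceFinset u ∪ G.incidenceFinset v) + 1 = G.degree u + G.degree v := by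
  have hinter : G.incidenceFinset u ∩ G.incidenceFinset v = {s(u, v)} := by
    rw [← coe_inj, coe_inter, coe_incidenceFinset, coe_incidenceFinset, coe_singleton,
      G.incidenceSet_inter_incidenceSet_of_adj huv]
  rw [← card_incidenceFinset_eq_degree, ← card_incidenceFinset_eq_degree,
    ← card_union_add_card_inter, hinter, card_singleton]

theorem mem_neighborFinset_union_of_mem_incidenceFinset {u v w : V} {e : Sym2 V}
    (huv : G.Adj u v) (he : e ∈ G.incidenceFinset u) (hw : w ∈ e) :
    w ∈ G.neighborFinset u ∪ G.neighborFinset v := by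
  rw [mem_incidenceFinset] at he
  rw [mem_union, mem_neighborFinset, mem_neighborFinset]
  obtain rfl | hwu := eq_or_ne w u
  · exact Or.inr huv.symm
  · exact Or.inl (G.adj_of_mem_incidenceSet hwu.symm he ⟨he.1, hw⟩)

def inducedC4Completions (u v : V) : Finset (V × V) :=
  {q | G.Adj v q.1 ∧ G.Adj q.1 q.2 ∧ G.Adj q.2 u ∧
    q.1 ≠ u ∧ q.2 ≠ v ∧ ¬ G.Adj u q.1 ∧ ¬ G.Adj v q.2}

variable {G}

theorem injOn_mk_inducedC4Completions (u v : V) :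
    Set.InjOn (fun q : V × V => s(q.1, q.2)) (G.inducedC4Completions u v) := by
  rintro ⟨x, y⟩ hxy ⟨x', y'⟩ hxy' h
  simp only [inducedC4Completions, coe_filter, mem_univ, true_and, Set.mem_ofPred_eq] at hxy hxy'
  rcases Sym2.eq_iff.mp h with ⟨rfl, rfl⟩ | ⟨rfl, -⟩
  · rfl
  · exact absurd hxy.1 hxy'.2.2.2.2.2.2

theorem mk_mem_edgeFinset_of_mem_inducedC4Completions {u v : V} {q : V × V}
    (hq : q ∈ G.inducedC4Completions u v) : s(q.1, q.2) ∈ G.edgeFinset :=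
  mem_edgeFinset.mpr (mem_filter.mp hq).2.2.1

theorem mk_notMem_incidenceFinset_union_of_mem_inducedC4Completions {u v : V} {q : V × V}
    (hq : q ∈ G.inducedC4Completions u v) :
    s(q.1, q.2) ∉ G.incidenceFinset u ∪ G.incidenceFinset v := by
  obtain ⟨hvx, -, hyu, hxu, hyv, -, -⟩ := (mem_filter.mp hq).2
  simp only [mem_union, mem_incidenceFinset, incidenceSet, Set.mem_ofPred_eq, Sym2.mem_iff]
  rintro (⟨-, rfl | rfl⟩ | ⟨-, rfl | rfl⟩)
  exacts [hxu rfl, hyu.ne rfl, hvx.ne rfl, hyv rfl]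

theorem mem_neighborFinset_union_of_mem_mk_of_mem_inducedC4Completions {u v w : V} {q : V × V}
    (hq : q ∈ G.inducedC4Completions u v) (hw : w ∈ s(q.1, q.2)) :
    w ∈ G.neighborFinset u ∪ G.neighborFinset v := by
  obtain ⟨hvx, -, hyu, -⟩ := (mem_filter.mp hq).2
  rw [mem_union, mem_neighborFinset, mem_neighborFinset]
  rcases Sym2.mem_iff.mp hw with rfl | rfl
  exacts [Or.inr hvx, Or.inl hyu.symm]

variable (G)

theorem card_inducedC4Completions_add_le {u v : V} (huv : G.Adj u v) :
    #(G.inducedC4Completions u v) + #(G.incidenceFinset u ∪ G.incidenceFinset v) +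
        #{e ∈ G.edgeFinset | ∃ w ∈ e, w ∉ G.neighborFinset u ∪ G.neighborFinset v} ≤
      #G.edgeFinset := by
  have h_opp_inc : Disjoint ((G.inducedC4Completions u v).image fun q => s(q.1, q.2))
      (G.incidenceFinset u ∪ G.incidenceFinset v) := by
    refine Finset.disjoint_left.mpr ?_
    simp only [mem_image, forall_exists_index, and_imp, forall_apply_eq_imp_iff₂]
    exact fun q hq => mk_notMem_incidenceFinset_union_of_mem_inducedC4Completions hq
  have h_opp_out : Disjoint ((G.inducedC4Completions u v).image fun q => s(q.1, q.2))
      {e ∈ G.edgeFinset | ∃ w ∈ e, w ∉ G.neighborFinset u ∪ G.neighborFinset v} := by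
    refine Finset.disjoint_left.mpr ?_
    simp only [mem_image, mem_filter, not_and, not_exists, not_not, forall_exists_index, and_imp,
      forall_apply_eq_imp_iff₂]
    exact fun q hq _ _ => mem_neighborFinset_union_of_mem_mk_of_mem_inducedC4Completions hq
  have h_inc_out : Disjoint (G.incidenceFinset u ∪ G.incidenceFinset v)
      {e ∈ G.edgeFinset | ∃ w ∈ e, w ∉ G.neighborFinset u ∪ G.neighborFinset v} := by
    refine Finset.disjoint_left.mpr ?_
    simp only [mem_union, mem_filter, not_and, not_exists, not_not]
    rintro e (he | he) - w hw
    · exact mem_union.mp (G.mem_neighborFinset_union_of_mem_incidenceFinset huv he hw)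
    · exact (mem_union.mp (G.mem_neighborFinset_union_of_mem_incidenceFinset huv.symm he hw)).symm
  have h_sub : ((G.inducedC4Completions u v).image fun q => s(q.1, q.2)) ∪
      (G.incidenceFinset u ∪ G.incidenceFinset v) ∪
      {e ∈ G.edgeFinset | ∃ w ∈ e, w ∉ G.neighborFinset u ∪ G.neighborFinset v} ⊆
        G.edgeFinset := by
    refine union_subset (union_subset ?_ (union_subset (G.incidenceFinset_subset u)
      (G.incidenceFinset_subset v))) (filter_subset _ _)
    exact image_subset_iff.mpr fun q hq => mk_mem_edgeFinset_of_mem_inducedC4Completions hq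
  rw [← card_image_of_injOn (injOn_mk_inducedC4Completions u v),
    ← card_union_of_disjoint h_opp_inc,
    ← card_union_of_disjoint (disjoint_union_left.mpr ⟨h_opp_out, h_inc_out⟩)]
  exact card_le_card h_sub

theorem card_inducedC4Completions_add_card_le (hdeg : ∀ w, 2 ≤ G.degree w) {u v : V}
    (huv : G.Adj u v) :
    #(G.inducedC4Completions u v) + Fintype.card V ≤ #G.edgeFinset + 1 := by
  have h_count := G.card_inducedC4Completions_add_le huv
  have h_incident := G.card_incidenceFinset_union_add_one huv
  have h_outer := G.mul_card_compl_le_two_mul_card_edges_meeting_compl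
    (G.neighborFinset u ∪ G.neighborFinset v) 2 fun w _ => hdeg w
  have h_near : #(G.neighborFinset u ∪ G.neighborFinset v) ≤ G.degree u + G.degree v := by
    rw [← card_neighborFinset_eq_degree, ← card_neighborFinset_eq_degree]
    exact card_union_le _ _
  have h_compl := card_compl_add_card (G.neighborFinset u ∪ G.neighborFinset v)
  omega

end SimpleGraph

/-- for every edge uv of a graph G with n vertices, m edges and
minimum degree ≥ 2, the number of induced 4-cycles containing uv is at most
m - n + 1. An induced C₄ containing the edge uv is determined by the ordered
pair (x,y) of its other two vertices, with x the neighbour of v and y the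
neighbour of u, so the count below equals N_ind(uv, C₄, G). -/
theorem stmt_4 {V : Type*} [Fintype V] (G : SimpleGraph V) (n m : ℕ)
    (hn : n = Fintype.card V) (hm : m = G.edgeSet.ncard)
    (hmin : ∀ v : V, 2 ≤ (G.neighborSet v).ncard)
    (u v : V) (huv : G.Adj u v) :
    (Nat.card {q : V × V //
        G.Adj v q.1 ∧ G.Adj q.1 q.2 ∧ G.Adj q.2 u ∧
        q.1 ≠ u ∧ q.2 ≠ v ∧ ¬ G.Adj u q.1 ∧ ¬ G.Adj v q.2} : ℝ)
      ≤ (m : ℝ) - n + 1 := by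
  classical
  have hdeg (w : V) : 2 ≤ G.degree w := by
    simpa only [← coe_neighborFinset, Set.ncard_coe_finset, card_neighborFinset_eq_degree]
      using hmin w
  have hcard : Nat.card {q : V × V // G.Adj v q.1 ∧ G.Adj q.1 q.2 ∧ G.Adj q.2 u ∧
      q.1 ≠ u ∧ q.2 ≠ v ∧ ¬ G.Adj u q.1 ∧ ¬ G.Adj v q.2} =
        #(G.inducedC4Completions u v) := by
    rw [Nat.card_eq_fintype_card, Fintype.card_subtype]
    rfl
  have hedges : m = #G.edgeFinset := by rw [hm, ← coe_edgeFinset, Set.ncard_coe_finset]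
  have hbound : (#(G.inducedC4Completions u v) : ℝ) + n ≤ m + 1 := by
    rw [hn, hedges]
    exact_mod_cast G.card_inducedC4Completions_add_card_le hdeg huv
  rw [hcard]
  linarith
end

section
/- Let λ > 0 and suppose F is a subcube of {0,1}^N with E[X | Y ∈ F] ≥ λ·E[X], where Y is a vector of N i.i.d. Bernoulli(p) random variables with p < 1/2, and X has complexity at most d. If additionally p < 1 − ((1+δ−ε)/(1+δ−ε/2))^{1/d} and λ = 1+δ−ε/2, then the one-supcube F^{(1)} of F satisfies E[X | Y ∈ F^{(1)}] ≥ (1+δ−ε)·E[X]. -/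
/-!
Conditionally on `Y ∈ F(S, b)`, a subcube `F(T, c)` compatible with it has probability
`∏_{i ∈ T \ S} P(Yᵢ = cᵢ)`. Passing from `F = F(I, x)` to its one-supcube `F(I₁, x)` releases
only coordinates where `x` is `0`, so each such product gains factors `1 - p`, at most `d` of
them; since `X` is a nonnegative combination of indicators of subcubes of codimension `≤ d`,
`E[X | Y ∈ F⁽¹⁾] ≥ (1 - p)^d E[X | Y ∈ F]`. The hypothesis on `p` says exactly that
`(1 - p)^d (1 + δ - ε/2) ≥ 1 + δ - ε`.
-/

open MeasureTheory

theorem setAverage_sum_smul_indicator_comp {Ω β κ : Type*} [MeasurableSpace Ω]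
    [MeasurableSpace β] {μ : Measure Ω} [IsFiniteMeasure μ] [Fintype κ] {f : Ω → β}
    (hf : Measurable f) (α : κ → ℝ) {s : κ → Set β} (hs : ∀ j, MeasurableSet (s j))
    (A : Set Ω) :
    ⨍ ω in A, (∑ j, α j • (s j).indicator 1) (f ω) ∂μ
      = ∑ j, α j * (μ.real (A ∩ f ⁻¹' s j) / μ.real A) := by
  have hterm : ∀ j, ∫ ω in A, (α j • (s j).indicator (1 : β → ℝ)) (f ω) ∂μ
      = α j * μ.real (A ∩ f ⁻¹' s j) := fun j => by
    simp only [Pi.smul_apply, smul_eq_mul, ← Set.indicator_comp_right]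
    rw [integral_const_mul, Pi.one_comp, integral_indicator_one (hf (hs j)),
      measureReal_restrict_apply (hf (hs j)), Set.inter_comm]
  have hint : ∀ j,
      Integrable (fun ω => (α j • (s j).indicator (1 : β → ℝ)) (f ω)) (μ.restrict A) := fun j => by
    simp only [Pi.smul_apply, smul_eq_mul, ← Set.indicator_comp_right]
    exact ((integrable_const 1).indicator (hf (hs j))).const_mul _
  simp only [setAverage_eq, Finset.sum_apply, smul_eq_mul]
  rw [integral_finsetSum _ fun j _ => hint j, Finset.mul_sum]
  refine Finset.sum_congr rfl fun j _ => ?_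
  rw [hterm j]
  ring

def subcube {ι : Type*} (S : Finset ι) (b : ι → Bool) : Set (ι → Bool) :=
  {y | ∀ i ∈ S, y i = b i}

theorem measurableSet_subcube {ι : Type*} (S : Finset ι) (b : ι → Bool) :
    MeasurableSet (subcube S b) := by
  have h : subcube S b = ⋂ i ∈ S, (fun y : ι → Bool => y i) ⁻¹' {b i} := by
    ext y; simp [subcube]
  rw [h]
  exact .biInter S.countable_toSet fun i _ => measurable_pi_apply i (measurableSet_singleton _)

theorem subcube_inter_subcube {ι : Type*} [DecidableEq ι] {S T : Finset ι} {b c : ι → Bool}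
    (hbc : ∀ i ∈ T, i ∈ S → c i = b i) :
    subcube S b ∩ subcube T c = subcube (S ∪ T) (S.piecewise b c) := by
  ext y
  simp only [subcube, Set.mem_inter_iff, Set.mem_ofPred_eq, Finset.mem_union]
  constructor
  · rintro ⟨hS, hT⟩ i (hi | hi)
    · rw [Finset.piecewise_eq_of_mem _ _ _ hi, hS i hi]
    · by_cases hiS : i ∈ S
      · rw [Finset.piecewise_eq_of_mem _ _ _ hiS, hS i hiS]
      · rw [Finset.piecewise_eq_of_notMem _ _ _ hiS, hT i hi]
  · intro h
    refine ⟨fun i hi => ?_, fun i hi => ?_⟩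
    · rw [h i (.inl hi), Finset.piecewise_eq_of_mem _ _ _ hi]
    · by_cases hiS : i ∈ S
      · rw [h i (.inr hi), Finset.piecewise_eq_of_mem _ _ _ hiS, hbc i hi hiS]
      · rw [h i (.inr hi), Finset.piecewise_eq_of_notMem _ _ _ hiS]

theorem subcube_inter_subcube_eq_empty {ι : Type*} {S T : Finset ι} {b c : ι → Bool} {i : ι}
    (hiS : i ∈ S) (hiT : i ∈ T) (hbc : c i ≠ b i) : subcube S b ∩ subcube T c = ∅ :=
  Set.eq_empty_of_forall_notMem fun _ ⟨hS, hT⟩ => hbc ((hT i hiT).symm.trans (hS i hiS))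

def HasComplexityAtMost {ι : Type*} (d : ℕ) (X : (ι → Bool) → ℝ) : Prop :=
  ∃ (m : ℕ) (α : Fin m → ℝ) (J : Fin m → Finset ι) (c : Fin m → ι → Bool),
    (∀ j, 0 ≤ α j) ∧ (∀ j, (J j).card ≤ d) ∧ X = ∑ j, α j • (subcube (J j) (c j)).indicator 1

theorem HasComplexityAtMost.nonneg {ι : Type*} {d : ℕ} {X : (ι → Bool) → ℝ}
    (hX : HasComplexityAtMost d X) (y : ι → Bool) : 0 ≤ X y := by
  obtain ⟨m, α, J, c, hα, -, rfl⟩ := hX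
  simp only [Finset.sum_apply, Pi.smul_apply, smul_eq_mul]
  exact Finset.sum_nonneg fun j _ =>
    mul_nonneg (hα j) (Set.indicator_nonneg (fun _ _ => zero_le_one) _)

/-- The coordinates of `Y` are i.i.d. Bernoulli(`p`), expressed through the probabilities of
subcubes. -/
def HasBernoulliSubcubeLaw {Ω ι : Type*} [MeasurableSpace Ω] (μ : Measure Ω) (Y : Ω → ι → Bool)
    (p : ℝ) : Prop :=
  ∀ (S : Finset ι) (b : ι → Bool),
    μ.real (Y ⁻¹' subcube S b) = ∏ i ∈ S, (if b i then p else 1 - p)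

namespace HasBernoulliSubcubeLaw

variable {Ω ι : Type*} [MeasurableSpace Ω] {μ : Measure Ω} {Y : Ω → ι → Bool} {p : ℝ}

theorem measureReal_pos (h : HasBernoulliSubcubeLaw μ Y p) (hp0 : 0 < p) (hp1 : p < 1)
    (S : Finset ι) (b : ι → Bool) : 0 < μ.real (Y ⁻¹' subcube S b) := by
  rw [h S b]
  exact Finset.prod_pos fun i _ => by cases b i <;> simp <;> linarith

theorem measureReal_inter_subcube [DecidableEq ι] (h : HasBernoulliSubcubeLaw μ Y p)
    {S T : Finset ι} {b c : ι → Bool} (hbc : ∀ i ∈ T, i ∈ S → c i = b i) :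
    μ.real (Y ⁻¹' subcube S b ∩ Y ⁻¹' subcube T c)
      = μ.real (Y ⁻¹' subcube S b) * ∏ i ∈ T \ S, (if c i then p else 1 - p) := by
  rw [← Set.preimage_inter, subcube_inter_subcube hbc, h, h, ← Finset.union_sdiff_self_eq_union,
    Finset.prod_union Finset.disjoint_sdiff]
  congr 1
  · exact Finset.prod_congr rfl fun i hi => by rw [Finset.piecewise_eq_of_mem _ _ _ hi]
  · exact Finset.prod_congr rfl fun i hi => by
      rw [Finset.piecewise_eq_of_notMem _ _ _ (Finset.mem_sdiff.mp hi).2]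

/-- Conditioned on `Y ∈ F(S, b)`, the subcube `F(T, c)` has probability `∏_{T \ S} P(Yᵢ = cᵢ)`
(or `0`); releasing a zero-coordinate of `T ∩ S` adds one factor `1 - p` to this product. -/
theorem one_sub_pow_mul_condProb_le [DecidableEq ι] (h : HasBernoulliSubcubeLaw μ Y p)
    (hp0 : 0 < p) (hp1 : p < 1) {S S' T : Finset ι} {b c : ι → Bool} {d : ℕ}
    (hS' : S' ⊆ S) (hb : ∀ i ∈ S \ S', b i = false) (hT : T.card ≤ d) :
    (1 - p) ^ d * (μ.real (Y ⁻¹' subcube S b ∩ Y ⁻¹' subcube T c) / μ.real (Y ⁻¹' subcube S b))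
      ≤ μ.real (Y ⁻¹' subcube S' b ∩ Y ⁻¹' subcube T c) / μ.real (Y ⁻¹' subcube S' b) := by
  by_cases hbc : ∀ i ∈ T, i ∈ S → c i = b i
  · have hbc' : ∀ i ∈ T, i ∈ S' → c i = b i := fun i hi hiS' => hbc i hi (hS' hiS')
    have hq : ∀ i, 0 ≤ (if c i then p else 1 - p) := fun i => by
      cases c i <;> simp <;> linarith
    rw [h.measureReal_inter_subcube hbc, h.measureReal_inter_subcube hbc',
      mul_div_cancel_left₀ _ (h.measureReal_pos hp0 hp1 S b).ne',
      mul_div_cancel_left₀ _ (h.measureReal_pos hp0 hp1 S' b).ne',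
      ← Finset.prod_sdiff (Finset.sdiff_subset_sdiff le_rfl hS')]
    have hreleased : ∀ i ∈ (T \ S') \ (T \ S), (if c i then p else 1 - p) = 1 - p := by
      intro i hi
      simp only [Finset.mem_sdiff, not_and, not_not] at hi
      have hiS : i ∈ S := hi.2 hi.1.1
      rw [hbc i hi.1.1 hiS, hb i (Finset.mem_sdiff.mpr ⟨hiS, hi.1.2⟩)]
      rfl
    rw [Finset.prod_congr rfl hreleased, Finset.prod_const]
    refine mul_le_mul_of_nonneg_right (pow_le_pow_of_le_one (by linarith) (by linarith) ?_)
      (Finset.prod_nonneg fun i _ => hq i)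
    exact (Finset.card_le_card (Finset.sdiff_subset.trans Finset.sdiff_subset)).trans hT
  · push Not at hbc
    obtain ⟨i, hiT, hiS, hne⟩ := hbc
    rw [← Set.preimage_inter, subcube_inter_subcube_eq_empty hiS hiT hne]
    simp only [Set.preimage_empty, measureReal_empty, zero_div, mul_zero]
    positivity

theorem one_sub_pow_mul_setAverage_le [IsFiniteMeasure μ] [DecidableEq ι]
    (h : HasBernoulliSubcubeLaw μ Y p) (hY : Measurable Y) (hp0 : 0 < p) (hp1 : p < 1)
    {d : ℕ} {X : (ι → Bool) → ℝ} (hX : HasComplexityAtMost d X) {S S' : Finset ι}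
    {b : ι → Bool} (hS' : S' ⊆ S) (hb : ∀ i ∈ S \ S', b i = false) :
    (1 - p) ^ d * ⨍ ω in Y ⁻¹' subcube S b, X (Y ω) ∂μ
      ≤ ⨍ ω in Y ⁻¹' subcube S' b, X (Y ω) ∂μ := by
  obtain ⟨m, α, J, c, hα, hJ, rfl⟩ := hX
  have hcube : ∀ j, MeasurableSet (subcube (J j) (c j)) := fun j => measurableSet_subcube _ _
  rw [setAverage_sum_smul_indicator_comp hY α hcube,
    setAverage_sum_smul_indicator_comp hY α hcube, Finset.mul_sum]
  refine Finset.sum_le_sum fun j _ => ?_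
  rw [mul_left_comm]
  exact mul_le_mul_of_nonneg_left (h.one_sub_pow_mul_condProb_le hp0 hp1 hS' hb (hJ j)) (hα j)

end HasBernoulliSubcubeLaw

theorem le_one_sub_pow_mul_of_lt_one_sub_rpow {p a b : ℝ} {d : ℕ} (hd : d ≠ 0) (ha : 0 < a)
    (hb : 0 < b) (hp : p < 1 - (a / b) ^ (d : ℝ)⁻¹) : a ≤ (1 - p) ^ d * b := by
  have hab : 0 ≤ a / b := (div_pos ha hb).le
  have hroot : ((a / b) ^ (d : ℝ)⁻¹) ^ d ≤ (1 - p) ^ d :=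
    pow_le_pow_left₀ (Real.rpow_nonneg hab _) (by linarith) d
  rw [Real.rpow_inv_natCast_pow hab hd, div_le_iff₀ hb] at hroot
  exact hroot

theorem stmt_11_general {Ω : Type*} [MeasurableSpace Ω] (μ : Measure Ω) [IsProbabilityMeasure μ]
    {N : ℕ} (Y : Ω → (Fin N → Bool)) (hY : Measurable Y)
    (p : ℝ) (hp0 : 0 < p) (hp : p < 1 / 2)
    (hBer : ∀ (S : Finset (Fin N)) (b : Fin N → Bool),
      (μ {ω | ∀ i ∈ S, Y ω i = b i}).toReal = ∏ i ∈ S, (if b i then p else 1 - p))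
    (X : (Fin N → Bool) → ℝ) (d : ℕ) (hd : 0 < d)
    (hcomp : ∃ (m : ℕ) (α : Fin m → ℝ) (J : Fin m → Finset (Fin N))
        (c : Fin m → (Fin N → Bool)),
      (∀ j, 0 ≤ α j) ∧ (∀ j, (J j).card ≤ d) ∧
      ∀ y, X y = ∑ j, α j * (if ∀ n ∈ J j, y n = c j n then (1 : ℝ) else 0))
    (ε δ : ℝ) (hε : 0 < ε)
    (hpd : p < 1 - ((1 + δ - ε) / (1 + δ - ε / 2)) ^ ((d : ℝ)⁻¹))
    (I : Finset (Fin N)) (x : Fin N → Bool)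
    (hcond : (∫ ω in Y ⁻¹' {y | ∀ i ∈ I, y i = x i}, X (Y ω) ∂μ)
        / (μ (Y ⁻¹' {y | ∀ i ∈ I, y i = x i})).toReal
        ≥ (1 + δ - ε / 2) * ∫ ω, X (Y ω) ∂μ) :
    (∫ ω in Y ⁻¹' {y | ∀ i ∈ I.filter (fun i => x i = true), y i = x i}, X (Y ω) ∂μ)
        / (μ (Y ⁻¹' {y | ∀ i ∈ I.filter (fun i => x i = true), y i = x i})).toReal
      ≥ (1 + δ - ε) * ∫ ω, X (Y ω) ∂μ := by
  have hp1 : p < 1 := by linarith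
  have hX : HasComplexityAtMost d X := by
    obtain ⟨m, α, J, c, hα, hJ, hX⟩ := hcomp
    refine ⟨m, α, J, c, hα, hJ, funext fun y => ?_⟩
    simp [hX y, subcube, Set.indicator_apply]
  have hEX : 0 ≤ ∫ ω, X (Y ω) ∂μ := integral_nonneg fun ω => hX.nonneg _
  rcases le_or_gt (1 + δ - ε) 0 with hμ | hμ
  · exact (mul_nonpos_of_nonpos_of_nonneg hμ hEX).trans
      (div_nonneg (integral_nonneg fun ω => hX.nonneg _) ENNReal.toReal_nonneg)
  have hAvg : ∀ s, (∫ ω in s, X (Y ω) ∂μ) / (μ s).toReal = ⨍ ω in s, X (Y ω) ∂μ := fun s => by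
    rw [setAverage_eq, smul_eq_mul, inv_mul_eq_div]
    rfl
  rw [hAvg] at hcond ⊢
  calc (1 + δ - ε) * ∫ ω, X (Y ω) ∂μ
      ≤ ((1 - p) ^ d * (1 + δ - ε / 2)) * ∫ ω, X (Y ω) ∂μ := by
        gcongr
        exact le_one_sub_pow_mul_of_lt_one_sub_rpow hd.ne' hμ (by linarith) hpd
    _ = (1 - p) ^ d * ((1 + δ - ε / 2) * ∫ ω, X (Y ω) ∂μ) := by ring
    _ ≤ (1 - p) ^ d * ⨍ ω in Y ⁻¹' subcube I x, X (Y ω) ∂μ := by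
        gcongr
        exact hcond
    _ ≤ _ := HasBernoulliSubcubeLaw.one_sub_pow_mul_setAverage_le hBer hY hp0 hp1 hX
        (Finset.filter_subset _ I) (by simp +contextual)

/-- Lemma 2.5 (passing to the one-supcube). If Y is a vector of N
i.i.d. Bernoulli(p) variables with 0 < p < 1/2 and
p < 1 - ((1+δ-ε)/(1+δ-ε/2))^{1/d}, X has complexity at most d, and F is a subcube
with E[X | Y ∈ F] ≥ (1+δ-ε/2)·E[X], then its one-supcube F⁽¹⁾ satisfies
E[X | Y ∈ F⁽¹⁾] ≥ (1+δ-ε)·E[X]. -/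
theorem stmt_11 {Ω : Type*} [MeasurableSpace Ω] (μ : Measure Ω) [IsProbabilityMeasure μ]
    {N : ℕ} (Y : Ω → (Fin N → Bool)) (hY : Measurable Y)
    (p : ℝ) (hp0 : 0 < p) (hp : p < 1 / 2)
    (hBer : ∀ (S : Finset (Fin N)) (b : Fin N → Bool),
      (μ {ω | ∀ i ∈ S, Y ω i = b i}).toReal = ∏ i ∈ S, (if b i then p else 1 - p))
    (X : (Fin N → Bool) → ℝ) (d : ℕ) (hd : 0 < d)
    (hcomp : ∃ (m : ℕ) (α : Fin m → ℝ) (J : Fin m → Finset (Fin N))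
        (c : Fin m → (Fin N → Bool)),
      (∀ j, 0 ≤ α j) ∧ (∀ j, (J j).card ≤ d) ∧
      ∀ y, X y = ∑ j, α j * (if ∀ n ∈ J j, y n = c j n then (1 : ℝ) else 0))
    (ε δ : ℝ) (hε : 0 < ε) (hδ : 0 < δ)
    (hpd : p < 1 - ((1 + δ - ε) / (1 + δ - ε / 2)) ^ ((d : ℝ)⁻¹))
    (I : Finset (Fin N)) (x : Fin N → Bool)
    (hcond : (∫ ω in Y ⁻¹' {y | ∀ i ∈ I, y i = x i}, X (Y ω) ∂μ)
        / (μ (Y ⁻¹' {y | ∀ i ∈ I, y i = x i})).toReal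
        ≥ (1 + δ - ε / 2) * ∫ ω, X (Y ω) ∂μ) :
    (∫ ω in Y ⁻¹' {y | ∀ i ∈ I.filter (fun i => x i = true), y i = x i}, X (Y ω) ∂μ)
        / (μ (Y ⁻¹' {y | ∀ i ∈ I.filter (fun i => x i = true), y i = x i})).toReal
      ≥ (1 + δ - ε) * ∫ ω, X (Y ω) ∂μ :=
  stmt_11_general μ Y hY p hp0 hp hBer X d hd hcomp ε δ hε hpd I x hcond
end
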